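/- (Proposition 1, wedge part.) Let N ≥ 3, r ≥ 2 be integers and let G_{N,r} be the spider web graph. For every integer k with 2 ≤ k ≤ N, the wedge Cheeger constant satisfies φ_{N,r}(k) ≤ (2r/(2r−1))·√(2·(1 − cos(2π⌊k/2⌋/N))); that is, there exists a wedge partition S_1, ..., S_k of G_{N,r} into k parts with max_{1 ≤ i ≤ k} Cut(S_i)/Volume(S_i) ≤ (2r/(2r−1))·√(2λ^C_k), where λ^C_k = 1 − cos(2π⌊k/2⌋/N) is the k-th eigenvalue of the normalized Laplacian of the cycle graph on N vertices and ⌊·⌋ denotes integer division. -/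

import Mathlib

/-!
Cut the cycle into `k` consecutive arcs of nearly equal length, each with at least
`q = ⌊N/k⌋` vertices, and take the wedges over them. A wedge over an arc of `c` vertices is left
only through the two end columns, so its cut is at most `2r`, while its volume is
`2c·r + c·2(r-1) = 2c(2r-1)`. Hence every ratio is at most `(2r/(2r-1))·1/(2q)`, and
`1/(2q) ≤ 4⌊k/2⌋/N ≤ √(2(1 - cos(2π⌊k/2⌋/N)))` by `N ≤ 8⌊k/2⌋q` and the Jordan-type bound
`cos x ≤ 1 - 2x²/π²` on `[-π, π]`.
-/

/-- The spider web graph `G_{N,r}`: the simple graph on vertex set `ZMod N × Fin r` in which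
`(i,j)` and `(i',j')` are adjacent iff (`j = j'` and `i' = i ± 1 mod N`) or (`i = i'` and
`|j - j'| = 1`); realized as the box (Cartesian) product of the cycle graph on `ZMod N`
(the circulant graph with jump `1`) with the path graph on `Fin r`. -/
def spiderWeb (N r : ℕ) : SimpleGraph (ZMod N × Fin r) :=
  SimpleGraph.boxProd (SimpleGraph.circulantGraph {(1 : ZMod N)}) (SimpleGraph.pathGraph r)

/-- `cut G S`: the number of edges of `G` with exactly one endpoint in `S`, counted as the
number of ordered pairs `(u, v)` with `u ∈ S`, `v ∉ S` and `u ~ v` (each such edge is counted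
exactly once this way). -/
noncomputable def cut {V : Type*} (G : SimpleGraph V) (S : Set V) : ℕ :=
  Set.ncard {p : V × V | p.1 ∈ S ∧ p.2 ∉ S ∧ G.Adj p.1 p.2}

/-- `volume G S`: the sum of the degrees of the vertices in `S`, counted as the number of
ordered pairs `(u, v)` with `u ∈ S` and `u ~ v`. -/
noncomputable def volume {V : Type*} (G : SimpleGraph V) (S : Set V) : ℕ :=
  Set.ncard {p : V × V | p.1 ∈ S ∧ G.Adj p.1 p.2}

/-- `I ⊆ ZMod N` is an arc of cardinality `c`: `I = {a, a+1, ..., a+c-1}` (mod `N`). -/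
def IsArc (N : ℕ) (I : Set (ZMod N)) (c : ℕ) : Prop :=
  ∃ a : ZMod N, I = (fun t : ℕ => a + (t : ZMod N)) '' Set.Iio c

/-- A wedge partition of the vertex set of the spider web graph `G_{N,r}` into `k` parts:
the parts are `A 1 × Fin r, ..., A k × Fin r` where the `A i` are pairwise disjoint
nonempty arcs of `ZMod N` whose union is all of `ZMod N`. -/
def IsWedgePartition (N r k : ℕ) (S : Fin k → Set (ZMod N × Fin r)) : Prop :=
  ∃ A : Fin k → Set (ZMod N),
    (∀ i, ∃ c, 1 ≤ c ∧ IsArc N (A i) c) ∧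
    Pairwise (Function.onFun Disjoint A) ∧
    (⋃ i, A i) = Set.univ ∧
    ∀ i, S i = A i ×ˢ (Set.univ : Set (Fin r))

/-- `B ⊆ Fin r` is an interval: a set of consecutive integers `{a, a+1, ..., b}` with
`a ≤ b < r` (in particular, it is nonempty). -/
def IsInterval (r : ℕ) (B : Set (Fin r)) : Prop :=
  ∃ a b : ℕ, a ≤ b ∧ b < r ∧ B = {j : Fin r | a ≤ (j : ℕ) ∧ (j : ℕ) ≤ b}

/-- A ring partition of the vertex set of the spider web graph `G_{N,r}` into `k` parts:
the parts are `ZMod N × B 1, ..., ZMod N × B k` where the `B i` are pairwise disjoint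
nonempty intervals of `Fin r` whose union is all of `Fin r`. -/
def IsRingPartition (N r k : ℕ) (S : Fin k → Set (ZMod N × Fin r)) : Prop :=
  ∃ B : Fin k → Set (Fin r),
    (∀ i, IsInterval r (B i)) ∧
    Pairwise (Function.onFun Disjoint B) ∧
    (⋃ i, B i) = Set.univ ∧
    ∀ i, S i = (Set.univ : Set (ZMod N)) ×ˢ B i

/-- The wedge Cheeger constant `φ_{N,r}(k)`: the minimum over all wedge partitions
`S 1, ..., S k` of `G_{N,r}` of `max_i Cut(S i)/Volume(S i)`. -/
noncomputable def wedgeCheeger (N r k : ℕ) : ℝ :=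
  sInf {x : ℝ | ∃ S : Fin k → Set (ZMod N × Fin r), IsWedgePartition N r k S ∧
    x = ⨆ i, (cut (spiderWeb N r) (S i) : ℝ) / (volume (spiderWeb N r) (S i) : ℝ)}

/-- The ring Cheeger constant `ψ_{N,r}(k)`: the minimum over all ring partitions
`S 1, ..., S k` of `G_{N,r}` of `max_i Cut(S i)/Volume(S i)`. -/
noncomputable def ringCheeger (N r k : ℕ) : ℝ :=
  sInf {x : ℝ | ∃ S : Fin k → Set (ZMod N × Fin r), IsRingPartition N r k S ∧
    x = ⨆ i, (cut (spiderWeb N r) (S i) : ℝ) / (volume (spiderWeb N r) (S i) : ℝ)}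

open SimpleGraph Finset Real

theorem volume_eq_sum_degree {V : Type*} [Fintype V] (G : SimpleGraph V) [DecidableRel G.Adj]
    (s : Finset V) : volume G ↑s = ∑ v ∈ s, G.degree v := by
  classical
  have hset : {p : V × V | p.1 ∈ (s : Set V) ∧ G.Adj p.1 p.2} =
      ↑((s ×ˢ univ).filter fun p : V × V => G.Adj p.1 p.2) := by
    ext; simp
  rw [volume, hset, Set.ncard_coe_finset, card_filter, sum_product]
  simp [← neighborFinset_eq_filter]

theorem cut_boxProd_prod_univ {α β : Type*} (G : SimpleGraph α) (H : SimpleGraph β)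
    (A : Set α) : cut (G □ H) (A ×ˢ Set.univ) = cut G A * Nat.card β := by
  have hset : {p : (α × β) × (α × β) | p.1 ∈ A ×ˢ Set.univ ∧ p.2 ∉ A ×ˢ Set.univ ∧
      (G □ H).Adj p.1 p.2} = (fun q : (α × α) × β => ((q.1.1, q.2), (q.1.2, q.2))) ''
        ({p : α × α | p.1 ∈ A ∧ p.2 ∉ A ∧ G.Adj p.1 p.2} ×ˢ Set.univ) := by
    ext ⟨⟨x, j⟩, ⟨y, j'⟩⟩
    constructor
    · rintro ⟨⟨hx, -⟩, hy, ⟨hadj, rfl : j = j'⟩ | ⟨-, rfl : x = y⟩⟩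
      · exact ⟨((x, y), j), ⟨⟨hx, fun h => hy ⟨h, trivial⟩, hadj⟩, trivial⟩, rfl⟩
      · exact absurd ⟨hx, trivial⟩ hy
    · rintro ⟨⟨⟨x, y⟩, j⟩, ⟨⟨hx, hy, hadj⟩, -⟩, h⟩
      cases h
      exact ⟨⟨hx, trivial⟩, fun h => hy h.1, Or.inl ⟨hadj, rfl⟩⟩
  rw [cut, hset, Set.ncard_image_of_injective _ (fun _ _ h => by grind), Set.ncard_prod,
    Set.ncard_univ, cut]

theorem volume_boxProd_prod_univ {α β : Type*} [Fintype α] [Fintype β] (G : SimpleGraph α)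
    (H : SimpleGraph β) [DecidableRel G.Adj] [DecidableRel H.Adj] (s : Finset α) :
    volume (G □ H) (↑s ×ˢ Set.univ) =
      Fintype.card β * ∑ x ∈ s, G.degree x + #s * ∑ y, H.degree y := by
  classical
  rw [← coe_univ, ← coe_product, volume_eq_sum_degree, sum_product]
  simp only [degree_boxProd, sum_add_distrib]
  congr 1
  · rw [mul_sum]
    exact sum_congr rfl fun x _ => by rw [← card_univ, ← smul_eq_mul, ← sum_const]
  · rw [← smul_eq_mul, ← sum_const]

theorem circulantGraph_singleton_adj_iff {G : Type*} [AddCommGroup G] {g : G} (hg : g ≠ 0)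
    {x y : G} : (circulantGraph {g}).Adj x y ↔ y = x + g ∨ y = x - g := by
  rw [circulantGraph_adj]
  constructor
  · rintro ⟨-, h | h⟩
    · right; rw [← h]; abel
    · left; rw [← h]; abel
  · rintro (rfl | rfl)
    · exact ⟨by simpa [eq_comm] using hg, Or.inr (by simp)⟩
    · exact ⟨fun h => hg (sub_eq_self.mp h.symm), Or.inl (by simp)⟩

theorem degree_circulantGraph_one {N : ℕ} (hN : 3 ≤ N) (x : ZMod N)
    [Fintype ((circulantGraph {(1 : ZMod N)}).neighborSet x)] :
    (circulantGraph {(1 : ZMod N)}).degree x = 2 := by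
  have h1 : ((1 : ℕ) : ZMod N) ≠ 0 := by
    rw [Ne, ZMod.natCast_eq_zero_iff]; exact Nat.not_dvd_of_pos_of_lt one_pos (by omega)
  have h2 : ((2 : ℕ) : ZMod N) ≠ 0 := by
    rw [Ne, ZMod.natCast_eq_zero_iff]; exact Nat.not_dvd_of_pos_of_lt two_pos (by omega)
  push_cast at h1 h2
  have hnbr : (circulantGraph {(1 : ZMod N)}).neighborSet x = {x + 1, x - 1} := by
    ext y; exact circulantGraph_singleton_adj_iff h1
  rw [← card_neighborSet_eq_degree, ← Nat.card_eq_fintype_card, hnbr, Nat.card_coe_set_eq,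
    Set.ncard_pair]
  intro h
  apply h2
  linear_combination h

theorem two_mul_sub_one_le_sum_degree_pathGraph (r : ℕ) [DecidableRel (pathGraph r).Adj] :
    2 * (r - 1) ≤ ∑ j, (pathGraph r).degree j := by
  let step (j : Fin (r - 1)) (b : Bool) : (pathGraph r).Dart :=
    let u : Fin r := ⟨j, by omega⟩
    let v : Fin r := ⟨j + 1, by omega⟩
    if b then ⟨(u, v), by simp [pathGraph_adj, u, v]⟩ else ⟨(v, u), by simp [pathGraph_adj, u, v]⟩
  have hinj : Function.Injective (fun p : Fin (r - 1) × Bool => step p.1 p.2) := by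
    rintro ⟨j, _ | _⟩ ⟨j', _ | _⟩ h <;> simp [step, Dart.ext_iff, Fin.ext_iff] at h <;> grind
  simpa [← dart_card_eq_sum_degrees, mul_comm] using Fintype.card_le_of_injective _ hinj

namespace IsArc

variable {N c : ℕ} {A : Set (ZMod N)}

theorem subsingleton_mem_add_one_notMem (hA : IsArc N A c) :
    {x | x ∈ A ∧ x + 1 ∉ A}.Subsingleton := by
  obtain ⟨a, rfl⟩ := hA
  suffices h : ∀ x ∈ {x | x ∈ _ ∧ x + 1 ∉ _}, x = a + ((c - 1 : ℕ) : ZMod N) from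
    fun x hx y hy => (h x hx).trans (h y hy).symm
  rintro _ ⟨⟨t, ht, rfl⟩, hnext⟩
  obtain rfl : t = c - 1 := by
    by_contra hne
    exact hnext ⟨t + 1, by simp at ht ⊢; omega, by push_cast; ring⟩
  rfl

theorem subsingleton_mem_sub_one_notMem (hA : IsArc N A c) :
    {x | x ∈ A ∧ x - 1 ∉ A}.Subsingleton := by
  obtain ⟨a, rfl⟩ := hA
  suffices h : ∀ x ∈ {x | x ∈ _ ∧ x - 1 ∉ _}, x = a from
    fun x hx y hy => (h x hx).trans (h y hy).symm
  rintro _ ⟨⟨t, ht, rfl⟩, hprev⟩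
  obtain rfl : t = 0 := by
    by_contra hne
    exact hprev ⟨t - 1, by simp at ht ⊢; omega,
      by push_cast [Nat.one_le_iff_ne_zero.mpr hne]; ring⟩
  simp

theorem ncard_eq (hA : IsArc N A c) (hcN : c ≤ N) : A.ncard = c := by
  obtain ⟨a, rfl⟩ := hA
  rw [Set.InjOn.ncard_image, ← Finset.coe_Iio, Set.ncard_coe_finset, Nat.card_Iio]
  intro t ht t' ht' h
  have := congrArg ZMod.val (add_left_cancel h)
  rwa [ZMod.val_cast_of_lt (by simp at ht; omega),
    ZMod.val_cast_of_lt (by simp at ht'; omega)] at this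

end IsArc

theorem isArc_preimage_val_Ico {N a b : ℕ} [NeZero N] (hab : a ≤ b) (hbN : b ≤ N) :
    IsArc N (ZMod.val ⁻¹' Set.Ico a b) (b - a) := by
  refine ⟨a, Set.ext fun x => ⟨fun ⟨hax, hxb⟩ => ⟨x.val - a, by simp; omega, ?_⟩, ?_⟩⟩
  · dsimp only
    rw [← Nat.cast_add, Nat.add_sub_cancel' hax, ZMod.natCast_zmod_val]
  · rintro ⟨t, ht, rfl⟩
    rw [Set.mem_Iio] at ht
    dsimp only
    rw [Set.mem_preimage, ← Nat.cast_add, ZMod.val_cast_of_lt (by omega)]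
    exact ⟨by omega, by omega⟩

theorem cut_circulantGraph_one_le_two {N c : ℕ} {A : Set (ZMod N)} (hA : IsArc N A c) :
    cut (circulantGraph {(1 : ZMod N)}) A ≤ 2 := by
  set R := {x | x ∈ A ∧ x + 1 ∉ A}
  set L := {x | x ∈ A ∧ x - 1 ∉ A}
  have hR : R.Subsingleton := hA.subsingleton_mem_add_one_notMem
  have hL : L.Subsingleton := hA.subsingleton_mem_sub_one_notMem
  have hsub : {p : ZMod N × ZMod N | p.1 ∈ A ∧ p.2 ∉ A ∧ (circulantGraph {1}).Adj p.1 p.2} ⊆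
      (fun x => (x, x + 1)) '' R ∪ (fun x => (x, x - 1)) '' L := by
    rintro ⟨x, y⟩ ⟨hx, hy, -, (h : x - y = 1) | (h : y - x = 1)⟩
    · obtain rfl : y = x - 1 := by linear_combination -h
      exact Or.inr ⟨x, ⟨hx, hy⟩, rfl⟩
    · obtain rfl : y = x + 1 := by linear_combination h
      exact Or.inl ⟨x, ⟨hx, hy⟩, rfl⟩
  calc cut (circulantGraph {1}) A
      ≤ ((fun x => (x, x + 1)) '' R ∪ (fun x => (x, x - 1)) '' L).ncard :=
        Set.ncard_le_ncard hsub ((hR.finite.image _).union (hL.finite.image _))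
    _ ≤ R.ncard + L.ncard := (Set.ncard_union_le _ _).trans
        (add_le_add (Set.ncard_image_le hR.finite) (Set.ncard_image_le hL.finite))
    _ ≤ 1 + 1 :=
        add_le_add ((Set.ncard_le_one hR.finite).mpr hR) ((Set.ncard_le_one hL.finite).mpr hL)

theorem cut_spiderWeb_prod_univ_le {N r c : ℕ} {A : Set (ZMod N)} (hA : IsArc N A c) :
    cut (spiderWeb N r) (A ×ˢ Set.univ) ≤ 2 * r := by
  rw [spiderWeb, cut_boxProd_prod_univ, Nat.card_eq_fintype_card, Fintype.card_fin]
  exact Nat.mul_le_mul_right r (cut_circulantGraph_one_le_two hA)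

theorem le_volume_spiderWeb_prod_univ {N r c : ℕ} (hN : 3 ≤ N) {A : Set (ZMod N)}
    (hA : IsArc N A c) (hcN : c ≤ N) :
    2 * c * (2 * r - 1) ≤ volume (spiderWeb N r) (A ×ˢ Set.univ) := by
  classical
  have : NeZero N := ⟨by omega⟩
  rw [← Set.coe_toFinset A, spiderWeb, volume_boxProd_prod_univ]
  simp only [degree_circulantGraph_one hN, sum_const, smul_eq_mul, Fintype.card_fin,
    ← Set.ncard_eq_toFinset_card', hA.ncard_eq hcN]
  calc 2 * c * (2 * r - 1) = r * (c * 2) + c * (2 * (r - 1)) := by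
        rcases r with _ | r
        · simp
        · rw [show 2 * (r + 1) - 1 = 2 * r + 1 by omega, Nat.add_sub_cancel]; ring
    _ ≤ _ := by gcongr; exact two_mul_sub_one_le_sum_degree_pathGraph r

theorem cut_div_volume_spiderWeb_prod_univ_le {N r c : ℕ} (hN : 3 ≤ N) (hr : 0 < r)
    {A : Set (ZMod N)} (hA : IsArc N A c) (hc : 0 < c) (hcN : c ≤ N) :
    (cut (spiderWeb N r) (A ×ˢ Set.univ) : ℝ) / volume (spiderWeb N r) (A ×ˢ Set.univ) ≤
      2 * r / (2 * r - 1) * (1 / (2 * c)) := by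
  have hvol : (2 * c * (2 * r - 1) : ℝ) ≤ volume (spiderWeb N r) (A ×ˢ Set.univ) := by
    have := le_volume_spiderWeb_prod_univ (r := r) hN hA hcN
    rw [← Nat.cast_le (α := ℝ)] at this
    push_cast [Nat.one_le_iff_ne_zero.mpr (by omega : 2 * r ≠ 0)] at this
    exact this
  have hcut : (cut (spiderWeb N r) (A ×ˢ Set.univ) : ℝ) ≤ 2 * r := by
    exact_mod_cast cut_spiderWeb_prod_univ_le hA
  have hr' : (1 : ℝ) ≤ r := by exact_mod_cast hr
  have hc' : (1 : ℝ) ≤ c := by exact_mod_cast hc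
  calc _ ≤ (2 * r : ℝ) / (2 * c * (2 * r - 1)) :=
        div_le_div₀ (by positivity) hcut (by nlinarith) hvol
    _ = 2 * r / (2 * r - 1) * (1 / (2 * c)) := by field_simp

theorem exists_lt_mem_Ico_of_lt {α : Type*} [LinearOrder α] (f : ℕ → α) {v : α}
    (h0 : f 0 ≤ v) : ∀ {k}, v < f k → ∃ i < k, v ∈ Set.Ico (f i) (f (i + 1))
  | 0, hv => absurd h0 hv.not_ge
  | k + 1, hv => by
    rcases lt_or_ge v (f k) with hk | hk
    · obtain ⟨i, hi, hvi⟩ := exists_lt_mem_Ico_of_lt f h0 hk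
      exact ⟨i, by omega, hvi⟩
    · exact ⟨k, k.lt_succ_self, hk, hv⟩

def balancedArc (N k i : ℕ) : Set (ZMod N) :=
  ZMod.val ⁻¹' Set.Ico (i * N / k) ((i + 1) * N / k)

theorem monotone_mul_div (N k : ℕ) : Monotone fun i => i * N / k :=
  fun _ _ h => Nat.div_le_div_right (Nat.mul_le_mul_right _ h)

theorem exists_isArc_balancedArc {N k i : ℕ} [NeZero N] (hi : i < k) :
    ∃ c, N / k ≤ c ∧ c ≤ N ∧ IsArc N (balancedArc N k i) c := by
  have hle : (i + 1) * N / k ≤ N := by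
    calc (i + 1) * N / k ≤ k * N / k := monotone_mul_div N k hi
      _ = N := Nat.mul_div_cancel_left _ (by omega)
  have hlen : i * N / k + N / k ≤ (i + 1) * N / k := by
    rw [add_mul, one_mul]; exact Nat.div_add_div_le_add_div
  exact ⟨(i + 1) * N / k - i * N / k, by omega, (Nat.sub_le _ _).trans hle,
    isArc_preimage_val_Ico (monotone_mul_div N k (by omega)) hle⟩

theorem isWedgePartition_balancedArc {N r k : ℕ} (hk : 0 < k) (hkN : k ≤ N) :
    IsWedgePartition N r k fun i => balancedArc N k i ×ˢ Set.univ := by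
  have : NeZero N := ⟨by omega⟩
  refine ⟨fun i => balancedArc N k i, fun i => ?_, fun i j hij => ?_, ?_, fun _ => rfl⟩
  · obtain ⟨c, hc, -, hA⟩ := exists_isArc_balancedArc (N := N) i.isLt
    exact ⟨c, (Nat.one_le_div_iff hk).mpr hkN |>.trans hc, hA⟩
  · exact ((monotone_mul_div N k).pairwise_disjoint_on_Ico_succ
      (Fin.val_injective.ne hij)).preimage _
  · refine Set.eq_univ_of_forall fun x => Set.mem_iUnion.mpr ?_
    obtain ⟨i, hi, hx⟩ := exists_lt_mem_Ico_of_lt (fun i => i * N / k) (by simp)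
      (show x.val < k * N / k by rw [Nat.mul_div_cancel_left _ hk]; exact ZMod.val_lt x)
    exact ⟨⟨i, hi⟩, hx⟩

theorem wedgeCheeger_le_of_forall_le {N r k : ℕ} {S : Fin k → Set (ZMod N × Fin r)} {b : ℝ}
    (hS : IsWedgePartition N r k S)
    (h : ∀ i, (cut (spiderWeb N r) (S i) : ℝ) / volume (spiderWeb N r) (S i) ≤ b) :
    wedgeCheeger N r k ≤ b := by
  have : Nonempty (Fin k) := by
    obtain ⟨A, -, -, hcover, -⟩ := hS
    exact (Set.mem_iUnion.mp (hcover ▸ Set.mem_univ (0 : ZMod N))).nonempty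
  refine (csInf_le ?_ ?_ : wedgeCheeger N r k ≤ _).trans (ciSup_le h)
  · exact ⟨0, by rintro _ ⟨S', -, rfl⟩; exact Real.iSup_nonneg fun i => by positivity⟩
  · exact ⟨S, hS, rfl⟩

theorem two_div_pi_mul_le_sqrt_two_mul_one_sub_cos {x : ℝ} (hx0 : 0 ≤ x) (hxπ : x ≤ π) :
    2 / π * x ≤ √(2 * (1 - cos x)) := by
  have hcos := cos_le_one_sub_mul_cos_sq (abs_le.mpr ⟨by linarith [pi_pos], hxπ⟩)
  rw [le_sqrt (by positivity) (by linarith [cos_le_one x])]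
  calc (2 / π * x) ^ 2 = 2 * (2 / π ^ 2 * x ^ 2) := by ring
    _ ≤ 2 * (1 - cos x) := by linarith

theorem le_eight_mul_half_mul_div {N k : ℕ} (hk : 2 ≤ k) (hkN : k ≤ N) :
    N ≤ 8 * (k / 2) * (N / k) := by
  have hq : 1 ≤ N / k := (Nat.one_le_div_iff (by omega)).mpr hkN
  have hN : N < k * (N / k + 1) := Nat.lt_mul_div_succ N (by omega)
  have hk2 : k ≤ 3 * (k / 2) := by omega
  nlinarith

theorem one_div_two_mul_div_le_sqrt_cycle_eigenvalue {N k : ℕ} (hk : 2 ≤ k) (hkN : k ≤ N) :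
    1 / (2 * ((N / k : ℕ) : ℝ)) ≤ √(2 * (1 - cos (2 * π * ((k / 2 : ℕ) : ℝ) / N))) := by
  have hN : (0 : ℝ) < N := by norm_cast; omega
  have hq : (0 : ℝ) < (N / k : ℕ) := by norm_cast; exact Nat.div_pos hkN (by omega)
  have hm : (2 * (k / 2 : ℕ) : ℝ) ≤ N := by norm_cast; omega
  have hNq : (N : ℝ) ≤ 8 * (k / 2 : ℕ) * (N / k : ℕ) := by
    exact_mod_cast le_eight_mul_half_mul_div hk hkN
  calc 1 / (2 * ((N / k : ℕ) : ℝ)) ≤ 2 / π * (2 * π * ((k / 2 : ℕ) : ℝ) / N) := by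
        rw [div_le_iff₀ (by positivity)]
        field_simp
        nlinarith
    _ ≤ _ := two_div_pi_mul_le_sqrt_two_mul_one_sub_cos (by positivity)
        (by rw [div_le_iff₀ hN]; nlinarith [pi_pos])

/-- **Proposition 1, wedge part.** For `N ≥ 3`, `r ≥ 2` and `2 ≤ k ≤ N`, the
wedge Cheeger constant of the spider web graph `G_{N,r}` satisfies
`φ_{N,r}(k) ≤ (2r/(2r−1))·√(2(1 − cos(2π⌊k/2⌋/N)))`; that is, there exists a wedge
partition `S 1, ..., S k` with `max_i Cut(S i)/Volume(S i) ≤ (2r/(2r−1))·√(2λ^C_k)`, where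
`λ^C_k = 1 − cos(2π⌊k/2⌋/N)` is the `k`-th eigenvalue of the normalized Laplacian of the
cycle graph on `N` vertices and `⌊·⌋` is integer division. -/
theorem wedgeCheeger_le_sqrt_cycle_eigenvalue (N r k : ℕ)
    (hN : 3 ≤ N) (hr : 2 ≤ r) (hk : 2 ≤ k) (hkN : k ≤ N) :
    wedgeCheeger N r k
      ≤ (2 * (r : ℝ) / (2 * (r : ℝ) - 1)) *
        Real.sqrt (2 * (1 - Real.cos (2 * Real.pi * ((k / 2 : ℕ) : ℝ) / (N : ℝ)))) ∧
    (∃ S : Fin k → Set (ZMod N × Fin r), IsWedgePartition N r k S ∧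
      ∀ i, (cut (spiderWeb N r) (S i) : ℝ) / (volume (spiderWeb N r) (S i) : ℝ)
        ≤ (2 * (r : ℝ) / (2 * (r : ℝ) - 1)) *
          Real.sqrt (2 * (1 - Real.cos (2 * Real.pi * ((k / 2 : ℕ) : ℝ) / (N : ℝ))))) := by
  have : NeZero N := ⟨by omega⟩
  have hS := isWedgePartition_balancedArc (r := r) (by omega) hkN
  have hr' : (2 : ℝ) ≤ r := by exact_mod_cast hr
  have hcoef : (0 : ℝ) ≤ 2 * r / (2 * r - 1) := div_nonneg (by positivity) (by linarith)
  have hratio : ∀ i : Fin k,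
      (cut (spiderWeb N r) (balancedArc N k i ×ˢ Set.univ) : ℝ) /
          volume (spiderWeb N r) (balancedArc N k i ×ˢ Set.univ) ≤
        2 * r / (2 * r - 1) * √(2 * (1 - cos (2 * π * ((k / 2 : ℕ) : ℝ) / N))) := by
    intro i
    obtain ⟨c, hqc, hcN, hA⟩ := exists_isArc_balancedArc (N := N) i.isLt
    have hq : 0 < N / k := Nat.div_pos hkN (by omega)
    calc _ ≤ 2 * r / (2 * r - 1) * (1 / (2 * c : ℝ)) :=
          cut_div_volume_spiderWeb_prod_univ_le hN (by omega) hA (by omega) hcN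
      _ ≤ 2 * r / (2 * r - 1) * (1 / (2 * (N / k : ℕ) : ℝ)) := by gcongr
      _ ≤ _ := by gcongr; exact one_div_two_mul_div_le_sqrt_cycle_eigenvalue hk hkN
  exact ⟨wedgeCheeger_le_of_forall_le hS hratio, _, hS, hratio⟩
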